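/- Fix an integer j₀ ≥ 2, let C = { Σ_{i∈F} ε_i e_i : F ⊂ ℕ finite, card F ≤ n_{j₀−1}, ε_i ∈ {−1,1} }, and let D' be the smallest subset of c₀₀ containing C and closed under the operations: for every j ≥ 1 and every f_1 < f_2 < ⋯ < f_d in D' with d ≤ 5·n_j, the element (1/m_j)(f_1 + ⋯ + f_d) belongs to D'. Then for every f ∈ D' and every choice of natural numbers k_1 < k_2 < ⋯ < k_{n_{j₀}}, one has |f( (1/n_{j₀}) Σ_{l=1}^{n_{j₀}} e_{k_l} )| ≤ 1/m_{j₀}. -/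

import Mathlib

/-!
Unfold `f ∈ D'` as a tree: the coordinate `f k` is `±∏ 1/m_j` over the operations on the path
to the leaf containing `k`, and `1/m_j = 2^(-5^(j-1))`. An operation of weight at least
`2^(-t)` with `t < 5^(j₀-1)` has `j < j₀`, hence at most `ν = 5 n_{j₀-1}` summands, so at most
`n_{j₀-1} ν^t` coordinates of `f` exceed `2^(-(t+1))`:
`∑_{k∈A} |f k| ≤ n_{j₀-1} ν^t + |A| / 2^(t+1)`. Applying this to the summands of the root
operation (when its `j` is below `j₀`; otherwise `1/m_j ≤ 1/m_{j₀}` suffices) bounds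
`∑_{k∈A} |f k|` by `n_{j₀-1} ν^(5^(j₀-1)) / 2 + |A| / (2 m_{j₀})`, and `n_{j₀} = ν^(3·5^(j₀-1))`
is large enough to make the first term at most `n_{j₀} / (2 m_{j₀})`.
-/

noncomputable section

/-- The sequence `m_j`: `m 1 = 2`, `m (j+1) = (m j)^5`, i.e. `m j = 2 ^ 5 ^ (j-1)`. -/
def mseq (j : ℕ) : ℕ := 2 ^ 5 ^ (j - 1)

/-- The sequence `n_j`: `n 1 = 4` and `n (j+1) = (5 n_j) ^ (3 · 5^j)`. -/
def nseq : ℕ → ℕ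
  | 0 => 1
  | 1 => 4
  | (j + 2) => (5 * nseq (j + 1)) ^ (3 * 5 ^ (j + 1))

/-- `f < g` for finitely supported functions: every element of the support of `f` is
less than every element of the support of `g`. -/
def BlockLt (f g : ℕ →₀ ℝ) : Prop :=
  ∀ a ∈ f.support, ∀ b ∈ g.support, a < b

/-- The action of `f ∈ c₀₀` on `x ∈ c₀₀`: `f(x) = ∑ k, f k * x k`. -/
def fapply (f x : ℕ →₀ ℝ) : ℝ := x.sum fun i v => f i * v

/-- The smallest subset `D'` of `c₀₀` containing the set
`C = {∑_{i ∈ F} ±e_i : card F ≤ n_{j₀-1}}` and closed under the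
`(𝓐_{5 n_j}, 1/m_j)` operations for all `j ≥ 1`. -/
inductive Dset (j₀ : ℕ) : (ℕ →₀ ℝ) → Prop
  | base (h : ℕ →₀ ℝ) (hcard : h.support.card ≤ nseq (j₀ - 1))
      (hval : ∀ k ∈ h.support, h k = 1 ∨ h k = -1) : Dset j₀ h
  | op (j d : ℕ) (hj : 1 ≤ j) (hd : d ≤ 5 * nseq j) (f : Fin d → (ℕ →₀ ℝ))
      (hmem : ∀ i, Dset j₀ (f i))
      (hblock : ∀ i i' : Fin d, i < i' → BlockLt (f i) (f i')) :
      Dset j₀ ((mseq j : ℝ)⁻¹ • ∑ i, f i)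

open Finset Function

lemma nseq_pos : ∀ j, 0 < nseq j
  | 0 => one_pos
  | 1 => by norm_num [nseq]
  | j + 2 => pow_pos (by have := nseq_pos (j + 1); omega) _

lemma nseq_mono : Monotone nseq := by
  refine monotone_nat_of_le_succ fun j => ?_
  match j with
  | 0 => norm_num [nseq]
  | j + 1 =>
    calc nseq (j + 1) ≤ 5 * nseq (j + 1) := by omega
      _ ≤ nseq (j + 2) := Nat.le_self_pow (by positivity) _

lemma one_le_five_mul_nseq (j : ℕ) : (1 : ℝ) ≤ 5 * nseq j := by
  have := nseq_pos j
  exact_mod_cast (by omega : 1 ≤ 5 * nseq j)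

lemma nseq_le_mul_pow (j t : ℕ) : (nseq j : ℝ) ≤ nseq j * (5 * nseq j : ℝ) ^ t :=
  le_mul_of_one_le_right (by positivity) (one_le_pow₀ (one_le_five_mul_nseq j))

lemma card_fin_le_five_mul_nseq {d j j' : ℕ} (hd : d ≤ 5 * nseq j) (hj : j ≤ j') :
    Fintype.card (Fin d) ≤ 5 * nseq j' := by
  simpa using hd.trans (Nat.mul_le_mul_left 5 (nseq_mono hj))

lemma mseq_mono : Monotone mseq := fun _ _ h =>
  Nat.pow_le_pow_right two_pos (Nat.pow_le_pow_right (by norm_num) (Nat.sub_le_sub_right h 1))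

lemma mseq_cast (j : ℕ) : (mseq j : ℝ) = 2 ^ 5 ^ (j - 1) := by
  simp [mseq]

lemma nseq_pred_mul_pow_le_nseq_div_mseq {j₀ : ℕ} (hj₀ : 2 ≤ j₀) :
    nseq (j₀ - 1) * (5 * nseq (j₀ - 1) : ℝ) ^ 5 ^ (j₀ - 1) ≤ nseq j₀ / mseq j₀ := by
  obtain ⟨q, rfl⟩ : ∃ q, j₀ = q + 2 := ⟨j₀ - 2, by omega⟩
  have hn := nseq_pos (q + 1)
  have hE : 1 ≤ 5 ^ (q + 1) := Nat.one_le_pow _ _ (by norm_num)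
  have key : 2 ^ 5 ^ (q + 1) * (nseq (q + 1) * (5 * nseq (q + 1)) ^ 5 ^ (q + 1))
      ≤ (5 * nseq (q + 1)) ^ (3 * 5 ^ (q + 1)) :=
    calc 2 ^ 5 ^ (q + 1) * (nseq (q + 1) * (5 * nseq (q + 1)) ^ 5 ^ (q + 1))
        ≤ (5 * nseq (q + 1)) ^ 5 ^ (q + 1)
          * (5 * nseq (q + 1) * (5 * nseq (q + 1)) ^ 5 ^ (q + 1)) := by
          gcongr <;> omega
      _ = (5 * nseq (q + 1)) ^ (2 * 5 ^ (q + 1) + 1) := by ring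
      _ ≤ (5 * nseq (q + 1)) ^ (3 * 5 ^ (q + 1)) := Nat.pow_le_pow_right (by omega) (by omega)
  rw [mseq_cast, le_div_iff₀' (by positivity)]
  exact_mod_cast key

section Blocks

variable {α ι : Type*} [DecidableEq α]

lemma BlockLt.disjoint_support {f g : ℕ →₀ ℝ} (h : BlockLt f g) : Disjoint f.support g.support :=
  Finset.disjoint_left.2 fun a ha hb => lt_irrefl a (h a ha a hb)

lemma pairwise_disjoint_support_of_blockLt {d : ℕ} {g : Fin d → ℕ →₀ ℝ}
    (hg : ∀ i i', i < i' → BlockLt (g i) (g i')) : Pairwise (Disjoint on fun i => (g i).support) :=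
  Pairwise.of_lt fun i i' h => (hg i i' h).disjoint_support

lemma sum_card_inter_support_le [Fintype ι] {g : ι → α →₀ ℝ}
    (hg : Pairwise (Disjoint on fun i => (g i).support)) (A : Finset α) :
    ∑ i, #(A ∩ (g i).support) ≤ #A := by
  rw [← card_biUnion fun i _ i' _ h => (hg h).mono inter_subset_right inter_subset_right]
  exact card_le_card (biUnion_subset.2 fun _ _ => inter_subset_left)

lemma sum_abs_eq_sum_inter_support (h : α →₀ ℝ) (A : Finset α) :
    ∑ k ∈ A, |h k| = ∑ k ∈ A ∩ h.support, |h k| :=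
  (sum_subset inter_subset_left fun k hA hk =>
    by rw [Finsupp.notMem_support_iff.1 fun hs => hk (mem_inter.2 ⟨hA, hs⟩), abs_zero]).symm

lemma sum_abs_eq_card_inter_support {h : α →₀ ℝ} (hh : ∀ k ∈ h.support, h k = 1 ∨ h k = -1)
    (A : Finset α) : ∑ k ∈ A, |h k| = #(A ∩ h.support) := by
  rw [sum_abs_eq_sum_inter_support, card_eq_sum_ones, Nat.cast_sum]
  refine sum_congr rfl fun k hk => ?_
  rcases hh k (mem_inter.1 hk).2 with h1 | h1 <;> simp [h1]

lemma sum_abs_le_of_card_support_le {h : α →₀ ℝ} {N : ℕ} (hcard : #h.support ≤ N)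
    (hh : ∀ k ∈ h.support, h k = 1 ∨ h k = -1) (A : Finset α) : ∑ k ∈ A, |h k| ≤ N := by
  rw [sum_abs_eq_card_inter_support hh]
  exact_mod_cast (card_le_card inter_subset_right).trans hcard

lemma sum_abs_smul_sum_le [Fintype ι] (g : ι → α →₀ ℝ) {c : ℝ} (hc : 0 ≤ c) (A : Finset α) :
    ∑ k ∈ A, |(c • ∑ i, g i) k| ≤ c * ∑ i, ∑ k ∈ A ∩ (g i).support, |g i k| := by
  simp_rw [← sum_abs_eq_sum_inter_support, Finsupp.smul_apply, Finsupp.finsetSum_apply,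
    smul_eq_mul, abs_mul, abs_of_nonneg hc, ← mul_sum]
  rw [sum_comm]
  gcongr
  exact abs_sum_le_sum_abs _ _

lemma sum_abs_smul_sum_le_card [Fintype ι] {g : ι → α →₀ ℝ}
    (hg : Pairwise (Disjoint on fun i => (g i).support))
    (hbound : ∀ i (A : Finset α), ∑ k ∈ A, |g i k| ≤ #A) {c : ℝ} (hc : 0 ≤ c) (A : Finset α) :
    ∑ k ∈ A, |(c • ∑ i, g i) k| ≤ c * #A := by
  refine (sum_abs_smul_sum_le g hc A).trans (mul_le_mul_of_nonneg_left ?_ hc)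
  calc ∑ i, ∑ k ∈ A ∩ (g i).support, |g i k| ≤ ∑ i, (#(A ∩ (g i).support) : ℝ) :=
        sum_le_sum fun i _ => hbound i _
    _ ≤ #A := by exact_mod_cast sum_card_inter_support_le hg A

lemma sum_abs_two_pow_inv_smul_sum_le [Fintype ι] {g : ι → α →₀ ℝ}
    (hg : Pairwise (Disjoint on fun i => (g i).support)) {n ν ε s : ℕ} (hε : 1 ≤ ε)
    (hι : Fintype.card ι ≤ ν)
    (hbound : ∀ i (A : Finset α), ∑ k ∈ A, |g i k| ≤ n * ν ^ s + #A / 2 ^ (s + 1))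
    (A : Finset α) :
    ∑ k ∈ A, |(((2 : ℝ) ^ ε)⁻¹ • ∑ i, g i) k| ≤ n * ν ^ (s + 1) / 2 + #A / 2 ^ (ε + s + 1) := by
  have hcard : (∑ i, #(A ∩ (g i).support) : ℝ) ≤ #A := by
    exact_mod_cast sum_card_inter_support_le hg A
  have hchildren : ∑ i, ∑ k ∈ A ∩ (g i).support, |g i k|
      ≤ ν * (n * ν ^ s) + #A / 2 ^ (s + 1) := by
    calc ∑ i, ∑ k ∈ A ∩ (g i).support, |g i k|
        ≤ ∑ i, (n * ν ^ s + #(A ∩ (g i).support) / 2 ^ (s + 1) : ℝ) :=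
          sum_le_sum fun i _ => hbound i _
      _ = Fintype.card ι * (n * ν ^ s) + (∑ i, #(A ∩ (g i).support) : ℝ) / 2 ^ (s + 1) := by
          rw [sum_add_distrib, ← sum_div, sum_const, card_univ, nsmul_eq_mul]
      _ ≤ ν * (n * ν ^ s) + #A / 2 ^ (s + 1) := by gcongr
  have h2ε : (2 : ℝ) ≤ 2 ^ ε := le_self_pow₀ one_le_two (by omega)
  calc ∑ k ∈ A, |(((2 : ℝ) ^ ε)⁻¹ • ∑ i, g i) k|
      ≤ (2 ^ ε)⁻¹ * (ν * (n * ν ^ s) + #A / 2 ^ (s + 1)) :=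
        (sum_abs_smul_sum_le g (by positivity) A).trans (by gcongr)
    _ = (2 ^ ε)⁻¹ * (n * ν ^ (s + 1)) + #A / 2 ^ (ε + s + 1) := by ring
    _ ≤ 2⁻¹ * (n * ν ^ (s + 1)) + #A / 2 ^ (ε + s + 1) := by gcongr
    _ = n * ν ^ (s + 1) / 2 + #A / 2 ^ (ε + s + 1) := by ring

end Blocks

namespace Dset

variable {j₀ : ℕ} {f : ℕ →₀ ℝ}

lemma sum_abs_le_card (hf : Dset j₀ f) (A : Finset ℕ) : ∑ k ∈ A, |f k| ≤ #A := by
  induction hf generalizing A with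
  | base h _ hval =>
    rw [sum_abs_eq_card_inter_support hval]
    exact_mod_cast card_le_card inter_subset_left
  | op j d _ _ g _ hblock ih =>
    refine (sum_abs_smul_sum_le_card (pairwise_disjoint_support_of_blockLt hblock) ih
      (by positivity) A).trans (mul_le_of_le_one_left (by positivity) ?_)
    rw [mseq_cast]
    exact inv_le_one_of_one_le₀ (one_le_pow₀ one_le_two)

lemma sum_abs_le_of_lt (hf : Dset j₀ f) {t : ℕ} (ht : t < 5 ^ (j₀ - 1)) (A : Finset ℕ) :
    ∑ k ∈ A, |f k| ≤ nseq (j₀ - 1) * (5 * nseq (j₀ - 1) : ℝ) ^ t + #A / 2 ^ (t + 1) := by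
  induction hf generalizing t A with
  | base h hcard hval =>
    calc ∑ k ∈ A, |h k| ≤ nseq (j₀ - 1) := sum_abs_le_of_card_support_le hcard hval A
      _ ≤ nseq (j₀ - 1) * (5 * nseq (j₀ - 1) : ℝ) ^ t := nseq_le_mul_pow _ _
      _ ≤ _ := le_add_of_nonneg_right (by positivity)
  | op j d _ hd g hmem hblock ih =>
    have hdisj := pairwise_disjoint_support_of_blockLt hblock
    rw [mseq_cast]
    by_cases hjt : 5 ^ (j - 1) ≤ t
    · have hε : 1 ≤ 5 ^ (j - 1) := Nat.one_le_pow _ _ (by norm_num)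
      have hj : j - 1 < j₀ - 1 := (Nat.pow_lt_pow_iff_right (by norm_num)).1 (hjt.trans_lt ht)
      have hν := card_fin_le_five_mul_nseq hd (show j ≤ j₀ - 1 by omega)
      have hs : t - 5 ^ (j - 1) < 5 ^ (j₀ - 1) := (Nat.sub_le _ _).trans_lt ht
      have hstep := sum_abs_two_pow_inv_smul_sum_le hdisj hε hν
        (fun i => by exact_mod_cast ih i hs) A
      rw [Nat.cast_mul, Nat.cast_ofNat, show 5 ^ (j - 1) + (t - 5 ^ (j - 1)) = t by omega] at hstep
      refine hstep.trans ?_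
      gcongr ?_ + _
      calc _ ≤ nseq (j₀ - 1) * (5 * nseq (j₀ - 1) : ℝ) ^ t / 2 := by
            gcongr
            · exact one_le_five_mul_nseq _
            · omega
        _ ≤ _ := half_le_self (by positivity)
    · have hdeep := sum_abs_smul_sum_le_card hdisj (fun i => (hmem i).sum_abs_le_card)
        (c := ((2 : ℝ) ^ 5 ^ (j - 1))⁻¹) (by positivity) A
      calc _ ≤ ((2 : ℝ) ^ 5 ^ (j - 1))⁻¹ * #A := hdeep
        _ ≤ #A / 2 ^ (t + 1) := by
            rw [inv_mul_eq_div]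
            gcongr
            · norm_num
            · omega
        _ ≤ _ := le_add_of_nonneg_left (by positivity)

lemma sum_abs_le_nseq_div_mseq (hj₀ : 2 ≤ j₀) (hf : Dset j₀ f) {A : Finset ℕ}
    (hA : #A ≤ nseq j₀) : ∑ k ∈ A, |f k| ≤ nseq j₀ / mseq j₀ := by
  have hbudget := nseq_pred_mul_pow_le_nseq_div_mseq hj₀
  cases hf with
  | base h hcard hval =>
    calc ∑ k ∈ A, |f k| ≤ nseq (j₀ - 1) := sum_abs_le_of_card_support_le hcard hval A
      _ ≤ _ := (nseq_le_mul_pow _ _).trans hbudget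
  | op j d _ hd g hmem hblock =>
    have hdisj := pairwise_disjoint_support_of_blockLt hblock
    rcases le_or_gt j₀ j with hj | hj
    · have hm : (0 : ℝ) < mseq j₀ := by rw [mseq_cast]; positivity
      have hmj : (mseq j₀ : ℝ) ≤ mseq j := by exact_mod_cast mseq_mono hj
      calc _ ≤ (mseq j : ℝ)⁻¹ * #A :=
            sum_abs_smul_sum_le_card hdisj (fun i => (hmem i).sum_abs_le_card) (by positivity) A
        _ ≤ (mseq j₀ : ℝ)⁻¹ * nseq j₀ := by gcongr
        _ = _ := inv_mul_eq_div _ _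
    · have hε : 1 ≤ 5 ^ (j - 1) := Nat.one_le_pow _ _ (by norm_num)
      have hεE : 5 ^ (j - 1) < 5 ^ (j₀ - 1) := Nat.pow_lt_pow_right (by norm_num) (by omega)
      have hstep := sum_abs_two_pow_inv_smul_sum_le hdisj hε
        (card_fin_le_five_mul_nseq hd (show j ≤ j₀ - 1 by omega))
        (fun i => by exact_mod_cast (hmem i).sum_abs_le_of_lt (Nat.sub_lt_self hε hεE.le)) A
      rw [Nat.cast_mul, Nat.cast_ofNat,
        show 5 ^ (j - 1) + (5 ^ (j₀ - 1) - 5 ^ (j - 1)) = 5 ^ (j₀ - 1) by omega] at hstep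
      rw [mseq_cast j]
      refine hstep.trans ?_
      calc _ ≤ (nseq j₀ / mseq j₀ : ℝ) / 2 + (nseq j₀ / mseq j₀ : ℝ) / 2 := by
            gcongr ?_ / 2 + ?_
            · refine le_trans ?_ hbudget
              gcongr
              · exact one_le_five_mul_nseq _
              · omega
            · rw [mseq_cast, pow_succ, ← div_div]
              gcongr
        _ = _ := add_halves _

end Dset

lemma fapply_smul_sum_single {ι : Type*} [Fintype ι] (f : ℕ →₀ ℝ) (c : ℝ) (k : ι → ℕ) :
    fapply f (c • ∑ l, Finsupp.single (k l) 1) = c * ∑ l, f (k l) := by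
  have hlin : ∀ x, fapply f x = Finsupp.linearCombination ℝ f x := fun x => by
    simp [fapply, Finsupp.linearCombination_apply, mul_comm]
  simp [hlin, map_sum, Finsupp.linearCombination_single]

/-- For every `f ∈ D'` and natural numbers `k 0 < k 1 < ⋯`
(`n_{j₀}` of them), the action of `f` on the average
`(1/n_{j₀}) ∑ l, e_{k l}` is at most `1/m_{j₀}` in absolute value. -/
theorem statement15 (j₀ : ℕ) (hj₀ : 2 ≤ j₀) (f : ℕ →₀ ℝ) (hf : Dset j₀ f)
    (k : Fin (nseq j₀) → ℕ) (hk : StrictMono k) :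
    |fapply f ((nseq j₀ : ℝ)⁻¹ • ∑ l, Finsupp.single (k l) (1 : ℝ))|
      ≤ 1 / (mseq j₀ : ℝ) := by
  set K := univ.map ⟨k, hk.injective⟩
  have hn : (0 : ℝ) < nseq j₀ := by exact_mod_cast nseq_pos j₀
  rw [fapply_smul_sum_single, abs_mul, abs_inv, Nat.abs_cast]
  calc (nseq j₀ : ℝ)⁻¹ * |∑ l, f (k l)| ≤ (nseq j₀ : ℝ)⁻¹ * ∑ x ∈ K, |f x| := by
        rw [sum_map]
        gcongr
        exact abs_sum_le_sum_abs _ _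
    _ ≤ (nseq j₀ : ℝ)⁻¹ * (nseq j₀ / mseq j₀) := by
        gcongr
        exact hf.sum_abs_le_nseq_div_mseq hj₀ (by simp [K])
    _ = 1 / mseq j₀ := by field_simp
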